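/- arXiv:2601.12878 — 4 statements merged into one kernel-verified Lean document; each statement's English description precedes it below -/
import Mathlib

section
/- Let n, p ∈ ℕ, let L, E ∈ Matrix (Fin n) (Fin n) ℝ, let c ∈ ℝ, let M ∈ ℕ with M ≥ 1, and let R : ℝ → Matrix (Fin n) (Fin n) ℝ satisfy R(h) = O(h^(p+2)) as h → 0. Then the function h ↦ (exp((c·h/M)·L + (c·h/M)^(p+1)·E + R(h)))^M − exp(c·h·L) − (c^(p+1)·h^(p+1)/M^p)·E is O(h^(p+2)) as h → 0, where the M-th power denotes the M-fold matrix product. -/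
open Asymptotics NormedSpace
open scoped Topology

open Filter
open scoped NNReal


section BanachAlgebra
variable {𝔸 : Type*} [NormedRing 𝔸] [NormedAlgebra ℝ 𝔸] [CompleteSpace 𝔸]

lemma my_pow_sub_pow (x y : 𝔸) (k : ℕ) :
    ‖x ^ (k + 1) - y ^ (k + 1)‖ ≤ (k + 1 : ℝ) * (‖x‖ + ‖y‖) ^ k * ‖x - y‖ := by
  induction k with
  | zero => simp
  | succ k ih =>
    have hs0 : (0:ℝ) ≤ ‖x‖ + ‖y‖ := by positivity
    have h1 : x ^ (k + 2) - y ^ (k + 2) = x ^ (k + 1) * (x - y) + (x ^ (k + 1) - y ^ (k + 1)) * y := by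
      noncomm_ring
    calc ‖x ^ (k + 2) - y ^ (k + 2)‖
        ≤ ‖x ^ (k + 1) * (x - y)‖ + ‖(x ^ (k + 1) - y ^ (k + 1)) * y‖ := by
          rw [h1]; exact norm_add_le _ _
      _ ≤ ‖x‖ ^ (k+1) * ‖x - y‖ + ((k + 1 : ℝ) * (‖x‖ + ‖y‖) ^ k * ‖x - y‖) * ‖y‖ := by
          refine add_le_add ((norm_mul_le _ _).trans ?_) ((norm_mul_le _ _).trans ?_)
          · exact mul_le_mul_of_nonneg_right (norm_pow_le' x (Nat.succ_pos k)) (norm_nonneg _)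
          · exact mul_le_mul_of_nonneg_right ih (norm_nonneg _)
      _ ≤ (‖x‖ + ‖y‖) ^ (k+1) * ‖x - y‖ + ((k + 1 : ℝ) * (‖x‖ + ‖y‖) ^ k * ‖x - y‖) * (‖x‖ + ‖y‖) := by
          refine add_le_add (mul_le_mul_of_nonneg_right ?_ (norm_nonneg _))
            (mul_le_mul_of_nonneg_left ?_ (by positivity))
          · exact pow_le_pow_left₀ (norm_nonneg x) (by linarith [norm_nonneg y]) _
          · linarith [norm_nonneg x]
      _ = ((k:ℝ) + 1 + 1) * (‖x‖ + ‖y‖) ^ (k + 1) * ‖x - y‖ := by ring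
      _ = ((k + 1 : ℕ) + 1 : ℝ) * (‖x‖ + ‖y‖) ^ (k + 1) * ‖x - y‖ := by push_cast; ring

lemma my_exp_key (x y : 𝔸) :
    ‖exp x - exp y - (x - y)‖
      ≤ ‖x - y‖ * ((‖x‖ + ‖y‖) * Real.exp (‖x‖ + ‖y‖)) := by
  set s : ℝ := ‖x‖ + ‖y‖ with hs
  have hs0 : (0:ℝ) ≤ s := by positivity
  set g : ℕ → 𝔸 := fun k => (k.factorial : ℝ)⁻¹ • x ^ k - (k.factorial : ℝ)⁻¹ • y ^ k with hg
  have hsx : Summable fun k : ℕ => (k.factorial : ℝ)⁻¹ • x ^ k := expSeries_summable' x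
  have hsy : Summable fun k : ℕ => (k.factorial : ℝ)⁻¹ • y ^ k := expSeries_summable' y
  have hsub : Summable g := hsx.sub hsy
  have hxy : exp x - exp y = ∑' k : ℕ, g k := by
    rw [exp_eq_tsum (𝕂 := ℝ), hsx.tsum_sub hsy]
  have hshift1 : Summable fun k : ℕ => g (k + 1) := by
    exact (summable_nat_add_iff 1).mpr hsub
  have hpeel : ∑' k : ℕ, g k = g 0 + (g 1 + ∑' k : ℕ, g (k + 2)) := by
    rw [hsub.tsum_eq_zero_add, hshift1.tsum_eq_zero_add]
  have hg0 : g 0 = 0 := by simp [hg]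
  have hg1 : g 1 = x - y := by simp [hg]
  have hmain : exp x - exp y - (x - y) = ∑' k : ℕ, g (k + 2) := by
    rw [hxy, hpeel, hg0, hg1]; abel
  have hbound : ∀ k : ℕ, ‖g (k + 2)‖ ≤ ‖x - y‖ * (s * (s ^ k / k.factorial)) := by
    intro k
    have h1 : g (k + 2) = ((k+2).factorial : ℝ)⁻¹ • (x ^ (k + 2) - y ^ (k + 2)) := by
      rw [hg, smul_sub]
    rw [h1, norm_smul]
    have h2 : ‖(((k+2).factorial : ℝ))⁻¹‖ = (((k+2).factorial : ℝ))⁻¹ := by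
      rw [Real.norm_eq_abs, abs_of_nonneg]; positivity
    rw [h2]
    have hfac_pos : (0:ℝ) < (k.factorial : ℝ) := by exact_mod_cast Nat.factorial_pos k
    have h3 : ‖x ^ (k + 2) - y ^ (k + 2)‖ ≤ ((k:ℝ) + 2) * s ^ (k + 1) * ‖x - y‖ := by
      have := my_pow_sub_pow x y (k + 1)
      calc ‖x ^ (k + 2) - y ^ (k + 2)‖ = ‖x ^ ((k+1) + 1) - y ^ ((k+1) + 1)‖ := by norm_num
        _ ≤ ((k+1:ℕ) + 1 : ℝ) * (‖x‖ + ‖y‖) ^ (k+1) * ‖x - y‖ := this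
        _ = ((k:ℝ) + 2) * s ^ (k + 1) * ‖x - y‖ := by rw [← hs]; push_cast; ring
    have h4 : (((k+2).factorial : ℝ)) = ((k:ℝ)+2) * (((k:ℝ)+1) * (k.factorial : ℝ)) := by
      rw [show k + 2 = (k+1)+1 from rfl, Nat.factorial_succ, Nat.factorial_succ]
      push_cast; ring
    have h5 : (((k+2).factorial : ℝ))⁻¹ * ‖x ^ (k + 2) - y ^ (k + 2)‖
        ≤ (((k+2).factorial : ℝ))⁻¹ * (((k:ℝ) + 2) * s ^ (k + 1) * ‖x - y‖) :=
      mul_le_mul_of_nonneg_left h3 (by positivity)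
    refine h5.trans ?_
    have heq : (((k+2).factorial : ℝ))⁻¹ * (((k:ℝ) + 2) * s ^ (k + 1) * ‖x - y‖)
        = ‖x - y‖ * (s * (s ^ k / (((k:ℝ)+1) * (k.factorial : ℝ)))) := by
      rw [h4]
      have hk2 : ((k:ℝ) + 2) ≠ 0 := by positivity
      have hk1 : ((k:ℝ) + 1) ≠ 0 := by positivity
      field_simp
      ring
    rw [heq]
    have hdiv : s ^ k / (((k:ℝ)+1) * (k.factorial : ℝ)) ≤ s ^ k / (k.factorial : ℝ) := by
      exact div_le_div_of_nonneg_left (pow_nonneg hs0 k) hfac_pos (by nlinarith)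
    exact mul_le_mul_of_nonneg_left (mul_le_mul_of_nonneg_left hdiv hs0) (norm_nonneg _)
  have hcompsum : Summable fun k : ℕ => ‖x - y‖ * (s * (s ^ k / k.factorial)) := by
    have := (Real.summable_pow_div_factorial s).mul_left (‖x - y‖ * s)
    simpa [mul_assoc] using this
  have hnormsum : Summable fun k : ℕ => ‖g (k + 2)‖ :=
    Summable.of_nonneg_of_le (fun k => norm_nonneg _) hbound hcompsum
  calc ‖exp x - exp y - (x - y)‖ = ‖∑' k : ℕ, g (k + 2)‖ := by rw [hmain]
    _ ≤ ∑' k : ℕ, ‖g (k + 2)‖ := norm_tsum_le_tsum_norm hnormsum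
    _ ≤ ∑' k : ℕ, ‖x - y‖ * (s * (s ^ k / k.factorial)) := Summable.tsum_le_tsum hbound hnormsum hcompsum
    _ = ‖x - y‖ * (s * ∑' k : ℕ, s ^ k / k.factorial) := by
        rw [tsum_mul_left, tsum_mul_left]
    _ = ‖x - y‖ * (s * Real.exp s) := by
        have : Real.exp s = ∑' k : ℕ, s ^ k / k.factorial := by
          rw [Real.exp_eq_exp_ℝ, exp_eq_tsum_div]
        rw [this]

lemma my_hpow_le {k l : ℕ} (hkl : l ≤ k) :
    (fun h : ℝ => h ^ k) =O[𝓝 (0:ℝ)] fun h : ℝ => h ^ l := by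
  refine IsBigO.of_bound 1 ?_
  filter_upwards [Metric.ball_mem_nhds (0:ℝ) zero_lt_one] with x hx
  rw [Metric.mem_ball, Real.dist_eq, sub_zero] at hx
  rw [one_mul, Real.norm_eq_abs, Real.norm_eq_abs, abs_pow, abs_pow]
  exact pow_le_pow_of_le_one (abs_nonneg x) hx.le hkl

lemma my_smul_const_isBigO {l : Filter ℝ} {r g : ℝ → ℝ} (hr : r =O[l] g) (A : 𝔸) :
    (fun t => r t • A) =O[l] g := by
  refine (IsBigO.of_bound ‖A‖ (Eventually.of_forall fun t => le_of_eq ?_)).trans hr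
  rw [norm_smul]; ring

lemma my_exp_pert {a b : ℝ → 𝔸} {k : ℕ}
    (ha : a =O[𝓝 (0:ℝ)] fun h : ℝ => h)
    (hb : b =O[𝓝 (0:ℝ)] fun h : ℝ => h)
    (hd : (fun h => a h - b h) =O[𝓝 (0:ℝ)] fun h : ℝ => h ^ k) :
    (fun h => exp (a h) - exp (b h) - (a h - b h)) =O[𝓝 (0:ℝ)]
      fun h : ℝ => h ^ (k + 1) := by
  have hne : (fun h => ‖a h‖ + ‖b h‖) =O[𝓝 (0:ℝ)] (fun h : ℝ => h) :=
    ha.norm_left.add hb.norm_left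
  have htend : Filter.Tendsto (fun h => ‖a h‖ + ‖b h‖) (𝓝 0) (𝓝 0) :=
    hne.trans_tendsto tendsto_id
  have hexp1 : (fun h => Real.exp (‖a h‖ + ‖b h‖)) =O[𝓝 (0:ℝ)] (fun _ : ℝ => (1:ℝ)) := by
    have ht : Filter.Tendsto (fun h => Real.exp (‖a h‖ + ‖b h‖)) (𝓝 0) (𝓝 (Real.exp 0)) :=
      (Real.continuous_exp.tendsto 0).comp htend
    exact ht.isBigO_one ℝ
  have h1 : (fun h => exp (a h) - exp (b h) - (a h - b h)) =O[𝓝 (0:ℝ)]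
      fun h => ‖a h - b h‖ * ((‖a h‖ + ‖b h‖) * Real.exp (‖a h‖ + ‖b h‖)) := by
    refine IsBigO.of_bound 1 (Eventually.of_forall fun h => ?_)
    rw [one_mul]
    refine (my_exp_key (a h) (b h)).trans (le_of_eq ?_)
    rw [Real.norm_eq_abs, abs_of_nonneg (by positivity)]
  have h2 : (fun h => ‖a h - b h‖ * ((‖a h‖ + ‖b h‖) * Real.exp (‖a h‖ + ‖b h‖)))
      =O[𝓝 (0:ℝ)] fun h : ℝ => h ^ k * (h * 1) := hd.norm_left.mul (hne.mul hexp1)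
  exact (h1.trans h2).congr_right fun h => by ring

lemma my_core (p : ℕ) (M : ℕ) (a b : ℝ → 𝔸) (T : ℝ → 𝔸)
    (ha1 : a =O[𝓝 (0:ℝ)] fun h : ℝ => h)
    (hb1 : b =O[𝓝 (0:ℝ)] fun h : ℝ => h)
    (hd1 : (fun h => a h - b h) =O[𝓝 (0:ℝ)] fun h : ℝ => h ^ (p + 1))
    (hT : (fun h => (M:ℝ) • (a h - b h) - T h) =O[𝓝 (0:ℝ)] fun h : ℝ => h ^ (p + 2)) :
    (fun h => (exp (a h)) ^ M - (exp (b h)) ^ M - T h) =O[𝓝 (0:ℝ)]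
      fun h : ℝ => h ^ (p + 2) := by
  have key1 : (fun h => exp (a h) - exp (b h) - (a h - b h)) =O[𝓝 (0:ℝ)]
      fun h : ℝ => h ^ (p + 2) := my_exp_pert ha1 hb1 hd1
  have hFG : (fun h => exp (a h) - exp (b h)) =O[𝓝 (0:ℝ)] fun h : ℝ => h ^ (p + 1) := by
    have heq : (fun h => exp (a h) - exp (b h))
        = fun h => (exp (a h) - exp (b h) - (a h - b h)) + (a h - b h) := by
      funext h; abel
    rw [heq]
    exact (key1.trans (my_hpow_le (by omega))).add hd1
  have hzero : (fun _ : ℝ => (0:𝔸)) =O[𝓝 (0:ℝ)] fun h : ℝ => h := isBigO_zero _ _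
  have hsub1 : ∀ (u : ℝ → 𝔸), u =O[𝓝 (0:ℝ)] (fun h : ℝ => h) →
      (fun h => exp (u h) - 1) =O[𝓝 (0:ℝ)] fun h : ℝ => h := by
    intro u hu
    have h0 : (fun h : ℝ => u h - (0:𝔸)) =O[𝓝 (0:ℝ)] fun h : ℝ => h ^ 1 := by
      simpa using hu
    have h2 : (fun h => exp (u h) - 1 - u h) =O[𝓝 (0:ℝ)] fun h : ℝ => h ^ 2 := by
      have := my_exp_pert hu hzero h0
      simpa [exp_zero] using this
    have heq : (fun h => exp (u h) - 1) = fun h => (exp (u h) - 1 - u h) + u h := by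
      funext h; abel
    rw [heq]
    exact (((h2.trans (my_hpow_le (by omega))).congr_right fun h => pow_one h)).add hu
  have hF1 : (fun h => exp (a h) - 1) =O[𝓝 (0:ℝ)] fun h : ℝ => h := hsub1 a ha1
  have hG1 : (fun h => exp (b h) - 1) =O[𝓝 (0:ℝ)] fun h : ℝ => h := hsub1 b hb1
  have hFb : (fun h => exp (a h)) =O[𝓝 (0:ℝ)] (fun _ : ℝ => (1:ℝ)) := by
    have ht : Filter.Tendsto (fun h => exp (a h)) (𝓝 0) (𝓝 (exp 0)) :=
      (exp_analytic (𝕂 := ℝ) (0:𝔸)).continuousAt.tendsto.comp (ha1.trans_tendsto tendsto_id)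
    exact ht.isBigO_one ℝ
  have hGb : (fun h => exp (b h)) =O[𝓝 (0:ℝ)] (fun _ : ℝ => (1:ℝ)) := by
    have ht : Filter.Tendsto (fun h => exp (b h)) (𝓝 0) (𝓝 (exp 0)) :=
      (exp_analytic (𝕂 := ℝ) (0:𝔸)).continuousAt.tendsto.comp (hb1.trans_tendsto tendsto_id)
    exact ht.isBigO_one ℝ
  have hGm : ∀ m : ℕ, (fun h => (exp (b h)) ^ m - 1) =O[𝓝 (0:ℝ)] fun h : ℝ => h := by
    intro m
    induction m with
    | zero => simpa using hzero
    | succ m ih =>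
      have heq : (fun h => (exp (b h)) ^ (m+1) - 1)
          = fun h => ((exp (b h)) ^ m - 1) * exp (b h) + (exp (b h) - 1) := by
        funext h; noncomm_ring
      rw [heq]
      exact ((ih.mul hGb).congr_right fun h => mul_one h).add hG1
  have claim : ∀ m : ℕ, (fun h => (exp (a h)) ^ m - (exp (b h)) ^ m
      - (m : ℝ) • (exp (a h) - exp (b h))) =O[𝓝 (0:ℝ)] fun h : ℝ => h ^ (p + 2) := by
    intro m
    induction m with
    | zero => simpa using (isBigO_zero (E' := 𝔸) (fun h : ℝ => h ^ (p + 2)) (𝓝 0))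
    | succ m ih =>
      have hid : ∀ (f g : 𝔸), f ^ (m+1) - g ^ (m+1) - ((m:ℝ)+1) • (f - g)
          = (f ^ m - g ^ m - (m:ℝ) • (f - g)) * f + (m:ℝ) • ((f - g) * (f - 1))
            + (g ^ m - 1) * (f - g) := by
        intro f g
        simp only [add_smul, one_smul, smul_sub, sub_mul, mul_sub, smul_mul_assoc, pow_succ,
          mul_one, one_mul]
        abel
      have heq : (fun h => (exp (a h)) ^ (m+1) - (exp (b h)) ^ (m+1)
            - ((m+1 : ℕ) : ℝ) • (exp (a h) - exp (b h)))
          = fun h => ((exp (a h)) ^ m - (exp (b h)) ^ m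
              - (m:ℝ) • (exp (a h) - exp (b h))) * exp (a h)
            + (m:ℝ) • ((exp (a h) - exp (b h)) * (exp (a h) - 1))
            + ((exp (b h)) ^ m - 1) * (exp (a h) - exp (b h)) := by
        funext h
        push_cast
        exact hid _ _
      rw [heq]
      refine IsBigO.add (IsBigO.add ?_ ?_) ?_
      · exact (ih.mul hFb).congr_right fun h => mul_one _
      · exact ((hFG.mul hF1).const_smul_left (m:ℝ)).congr_right fun h => by ring
      · exact ((hGm m).mul hFG).congr_right fun h => by ring
  have hTail : (fun h => (M:ℝ) • (exp (a h) - exp (b h)) - T h) =O[𝓝 (0:ℝ)]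
      fun h : ℝ => h ^ (p + 2) := by
    have heq : (fun h => (M:ℝ) • (exp (a h) - exp (b h)) - T h)
        = fun h => (M:ℝ) • (exp (a h) - exp (b h) - (a h - b h))
          + ((M:ℝ) • (a h - b h) - T h) := by
      funext h
      simp only [smul_sub]
      abel
    rw [heq]
    exact (key1.const_smul_left ((M:ℝ))).add hT
  have heq : (fun h => (exp (a h)) ^ M - (exp (b h)) ^ M - T h)
      = fun h => ((exp (a h)) ^ M - (exp (b h)) ^ M
          - (M:ℝ) • (exp (a h) - exp (b h)))
        + ((M:ℝ) • (exp (a h) - exp (b h)) - T h) := by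
    funext h; abel
  rw [heq]
  exact (claim M).add hTail

end BanachAlgebra

lemma my_hc1 (c : ℝ) (M : ℕ) : (fun h : ℝ => c * h / M) =O[𝓝 (0:ℝ)] fun h : ℝ => h := by
  refine IsBigO.of_bound (|c| / M) (Eventually.of_forall fun h => le_of_eq ?_)
  rw [Real.norm_eq_abs, Real.norm_eq_abs, abs_div, abs_mul, Nat.abs_cast]
  ring

section MatrixPart

attribute [local instance] Matrix.linftyOpNormedRing Matrix.linftyOpNormedAlgebra

theorem stmt2_linfty (n p : ℕ) (L E : Matrix (Fin n) (Fin n) ℝ) (c : ℝ) (M : ℕ) (hM : 1 ≤ M)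
    (R : ℝ → Matrix (Fin n) (Fin n) ℝ)
    (hRe : ∀ i j, (fun h : ℝ => R h i j) =O[𝓝 (0:ℝ)] fun h : ℝ => h ^ (p + 2)) :
    ∀ i j, (fun h : ℝ =>
        ((exp ((c * h / M) • L + (c * h / M) ^ (p + 1) • E + R h)) ^ M
          - exp ((c * h) • L)
          - (c ^ (p + 1) * h ^ (p + 1) / (M : ℝ) ^ p) • E) i j)
      =O[𝓝 (0:ℝ)] fun h : ℝ => h ^ (p + 2) := by
  have hM0 : ((M:ℝ)) ≠ 0 := Nat.cast_ne_zero.mpr (by omega)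
  -- norm vs entries, for the linfty operator norm
  have hent : ∀ (A : Matrix (Fin n) (Fin n) ℝ) (i j), ‖A i j‖ ≤ ‖A‖ := by
    intro A i j
    have h1 : ‖A i j‖₊ ≤ ‖A‖₊ := by
      rw [Matrix.linfty_opNNNorm_def]
      refine le_trans ?_ (Finset.le_sup (f := fun i => ∑ j, ‖A i j‖₊) (Finset.mem_univ i))
      exact Finset.single_le_sum (f := fun j' => ‖A i j'‖₊) (fun _ _ => zero_le)
        (Finset.mem_univ j)
    exact_mod_cast h1
  have hsum : ∀ (A : Matrix (Fin n) (Fin n) ℝ), ‖A‖ ≤ ∑ i, ∑ j, ‖A i j‖ := by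
    intro A
    have h1 : ‖A‖₊ ≤ ∑ i, ∑ j, ‖A i j‖₊ := by
      rw [Matrix.linfty_opNNNorm_def]
      refine Finset.sup_le fun i _ => ?_
      exact Finset.single_le_sum (f := fun i => ∑ j, ‖A i j‖₊) (fun _ _ => zero_le)
        (Finset.mem_univ i)
    calc ‖A‖ = ((‖A‖₊ : ℝ≥0) : ℝ) := (coe_nnnorm A).symm
      _ ≤ ((∑ i, ∑ j, ‖A i j‖₊ : ℝ≥0) : ℝ) := by exact_mod_cast h1
      _ = ∑ i, ∑ j, ‖A i j‖ := by push_cast; rfl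
  have hR : R =O[𝓝 (0:ℝ)] fun h : ℝ => h ^ (p + 2) := by
    have hmid : R =O[𝓝 (0:ℝ)] (fun h : ℝ => ∑ i : Fin n, ∑ j : Fin n, ‖R h i j‖) :=
      IsBigO.of_bound 1 (Eventually.of_forall fun h => by
        rw [one_mul, Real.norm_eq_abs, abs_of_nonneg (by positivity)]
        exact hsum (R h))
    exact hmid.trans (IsBigO.fun_sum fun i _ => IsBigO.fun_sum fun j _ => (hRe i j).norm_left)
  -- scalar asymptotics
  have hc1 := my_hc1 c M
  have hck : (fun h : ℝ => (c * h / M) ^ (p + 1)) =O[𝓝 (0:ℝ)] fun h : ℝ => h ^ (p + 1) :=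
    hc1.pow _
  have hpow1 : (fun h : ℝ => h ^ (p + 1)) =O[𝓝 (0:ℝ)] fun h : ℝ => h :=
    (my_hpow_le (by omega)).congr_right fun h => pow_one h
  have hpow2 : (fun h : ℝ => h ^ (p + 2)) =O[𝓝 (0:ℝ)] fun h : ℝ => h :=
    (my_hpow_le (by omega)).congr_right fun h => pow_one h
  have hb1 : (fun h : ℝ => (c * h / M) • L) =O[𝓝 (0:ℝ)] fun h : ℝ => h :=
    my_smul_const_isBigO hc1 L
  have ha1 : (fun h : ℝ => (c * h / M) • L + (c * h / M) ^ (p + 1) • E + R h)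
      =O[𝓝 (0:ℝ)] fun h : ℝ => h :=
    (hb1.add ((my_smul_const_isBigO hck E).trans hpow1)).add (hR.trans hpow2)
  have hd1 : (fun h : ℝ => ((c * h / M) • L + (c * h / M) ^ (p + 1) • E + R h)
      - (c * h / M) • L) =O[𝓝 (0:ℝ)] fun h : ℝ => h ^ (p + 1) := by
    have heq : (fun h : ℝ => ((c * h / M) • L + (c * h / M) ^ (p + 1) • E + R h)
        - (c * h / M) • L) = fun h : ℝ => (c * h / M) ^ (p + 1) • E + R h := by
      funext h; abel
    rw [heq]
    exact (my_smul_const_isBigO hck E).add (hR.trans (my_hpow_le (by omega)))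
  have hscal : ∀ h : ℝ, (M:ℝ) * (c * h / M) ^ (p + 1) = c ^ (p + 1) * h ^ (p + 1) / (M:ℝ) ^ p := by
    intro h
    rw [div_pow, mul_pow]
    field_simp
    ring
  have hT : (fun h : ℝ => (M:ℝ) • (((c * h / M) • L + (c * h / M) ^ (p + 1) • E + R h)
      - (c * h / M) • L) - (c ^ (p + 1) * h ^ (p + 1) / (M : ℝ) ^ p) • E)
      =O[𝓝 (0:ℝ)] fun h : ℝ => h ^ (p + 2) := by
    have heq : (fun h : ℝ => (M:ℝ) • (((c * h / M) • L + (c * h / M) ^ (p + 1) • E + R h)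
        - (c * h / M) • L) - (c ^ (p + 1) * h ^ (p + 1) / (M : ℝ) ^ p) • E)
        = fun h : ℝ => (M:ℝ) • R h := by
      funext h
      rw [show ((c * h / M) • L + (c * h / M) ^ (p + 1) • E + R h) - (c * h / M) • L
        = (c * h / M) ^ (p + 1) • E + R h from by abel]
      rw [smul_add, smul_smul, hscal h]
      abel
    rw [heq]
    exact hR.const_smul_left ((M:ℝ))
  have H : (fun h : ℝ =>
      (exp ((c * h / M) • L + (c * h / M) ^ (p + 1) • E + R h)) ^ M
        - (exp ((c * h / M) • L)) ^ M
        - (c ^ (p + 1) * h ^ (p + 1) / (M : ℝ) ^ p) • E) =O[𝓝 (0:ℝ)]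
      fun h : ℝ => h ^ (p + 2) :=
    my_core p M _ _ _ ha1 hb1 hd1 hT
  have hGM : ∀ h : ℝ, (exp ((c * h / M) • L)) ^ M = exp ((c * h) • L) := by
    intro h
    rw [← Matrix.exp_nsmul]
    congr 1
    rw [← Nat.cast_smul_eq_nsmul ℝ, smul_smul]
    congr 1
    field_simp
  have H2 : (fun h : ℝ =>
      (exp ((c * h / M) • L + (c * h / M) ^ (p + 1) • E + R h)) ^ M
        - exp ((c * h) • L)
        - (c ^ (p + 1) * h ^ (p + 1) / (M : ℝ) ^ p) • E) =O[𝓝 (0:ℝ)]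
      fun h : ℝ => h ^ (p + 2) := by
    have heq : (fun h : ℝ =>
        (exp ((c * h / M) • L + (c * h / M) ^ (p + 1) • E + R h)) ^ M
          - exp ((c * h) • L)
          - (c ^ (p + 1) * h ^ (p + 1) / (M : ℝ) ^ p) • E)
        = fun h : ℝ =>
        (exp ((c * h / M) • L + (c * h / M) ^ (p + 1) • E + R h)) ^ M
          - (exp ((c * h / M) • L)) ^ M
          - (c ^ (p + 1) * h ^ (p + 1) / (M : ℝ) ^ p) • E := by
      funext h; rw [hGM h]
    rw [heq]
    exact H
  intro i j
  exact (isBigO_of_le (𝓝 (0:ℝ)) fun h => hent _ i j).trans H2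

end MatrixPart


attribute [local instance] Matrix.normedAddCommGroup


theorem stmt2 (n p : ℕ) (L E : Matrix (Fin n) (Fin n) ℝ) (c : ℝ) (M : ℕ) (hM : 1 ≤ M)
    (R : ℝ → Matrix (Fin n) (Fin n) ℝ)
    (hR : R =O[𝓝 (0 : ℝ)] fun h : ℝ => h ^ (p + 2)) :
    (fun h : ℝ =>
        (exp ((c * h / M) • L + (c * h / M) ^ (p + 1) • E + R h)) ^ M
          - exp ((c * h) • L)
          - (c ^ (p + 1) * h ^ (p + 1) / (M : ℝ) ^ p) • E)
      =O[𝓝 (0 : ℝ)] fun h : ℝ => h ^ (p + 2) := by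
  have hRe : ∀ i j, (fun h : ℝ => R h i j) =O[𝓝 (0:ℝ)] fun h : ℝ => h ^ (p + 2) :=
    fun i j => (isBigO_of_le (𝓝 (0:ℝ)) fun h =>
      Matrix.norm_entry_le_entrywise_sup_norm (R h)).trans hR
  have H := stmt2_linfty n p L E c M hM R hRe
  have hmid : (fun h : ℝ =>
        (exp ((c * h / M) • L + (c * h / M) ^ (p + 1) • E + R h)) ^ M
          - exp ((c * h) • L)
          - (c ^ (p + 1) * h ^ (p + 1) / (M : ℝ) ^ p) • E)
      =O[𝓝 (0:ℝ)] (fun h : ℝ => ∑ i : Fin n, ∑ j : Fin n,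
        ‖((exp ((c * h / M) • L + (c * h / M) ^ (p + 1) • E + R h)) ^ M
          - exp ((c * h) • L)
          - (c ^ (p + 1) * h ^ (p + 1) / (M : ℝ) ^ p) • E) i j‖) := by
    refine IsBigO.of_bound 1 (Eventually.of_forall fun h => ?_)
    rw [one_mul, Real.norm_eq_abs, abs_of_nonneg (by positivity)]
    refine (Matrix.norm_le_iff (by positivity)).mpr fun i j => ?_
    refine le_trans (Finset.single_le_sum
      (f := fun j' => ‖((exp ((c * h / M) • L + (c * h / M) ^ (p + 1) • E + R h)) ^ M
          - exp ((c * h) • L)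
          - (c ^ (p + 1) * h ^ (p + 1) / (M : ℝ) ^ p) • E) i j'‖)
      (fun _ _ => norm_nonneg _) (Finset.mem_univ j)) ?_
    exact Finset.single_le_sum
      (f := fun i' => ∑ j' : Fin n, ‖((exp ((c * h / M) • L + (c * h / M) ^ (p + 1) • E + R h)) ^ M
          - exp ((c * h) • L)
          - (c ^ (p + 1) * h ^ (p + 1) / (M : ℝ) ^ p) • E) i' j'‖)
      (fun _ _ => Finset.sum_nonneg fun _ _ => norm_nonneg _) (Finset.mem_univ i)
  exact hmid.trans (IsBigO.fun_sum fun i _ => IsBigO.fun_sum fun j _ => (H i j).norm_left)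
end

section
/- Let h ∈ ℝ with h > 0, let c ∈ ℝ with c ≠ 0, let m ∈ ℕ with m ≥ 1, and let p, q ∈ ℕ with p > q ≥ 1. If h^((q − p : ℝ)/q) ≤ m (real power with real exponent), then |(c·h)^(q+1)| / ⌈|c|·m⌉^q ≤ |c| · h^(p+1), where ⌈|c|·m⌉ denotes the ceiling of the real number |c|·m. In particular, |(c·h)^(q+1) / ⌈|c|·m⌉^q| = O(h^(p+1)) as h → 0 under this constraint on m. -/
theorem stmt5 (h : ℝ) (hh : 0 < h) (c : ℝ) (hc : c ≠ 0) (m : ℕ) (hm : 1 ≤ m)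
    (p q : ℕ) (hq : 1 ≤ q) (hpq : q < p)
    (hmr : h ^ (((q : ℝ) - (p : ℝ)) / (q : ℝ)) ≤ (m : ℝ)) :
    |(c * h) ^ (q + 1)| / (⌈|c| * (m : ℝ)⌉ : ℝ) ^ q ≤ |c| * h ^ (p + 1) := by
  have hc' : (0:ℝ) < |c| := abs_pos.mpr hc
  have hm0 : (0:ℝ) < m := by exact_mod_cast Nat.lt_of_lt_of_le Nat.zero_lt_one hm
  have hcm : (0:ℝ) < |c| * m := mul_pos hc' hm0
  have hceil : |c| * m ≤ (⌈|c| * (m:ℝ)⌉ : ℝ) := Int.le_ceil _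
  have hceilpos : (0:ℝ) < (⌈|c| * (m:ℝ)⌉ : ℝ) := lt_of_lt_of_le hcm hceil
  have hqR : (0:ℝ) < q := by exact_mod_cast Nat.lt_of_lt_of_le Nat.zero_lt_one hq
  -- key: h^(q-p) ≤ m^q (rpow)
  have key : h ^ ((q:ℝ) - p) ≤ (m:ℝ) ^ q := by
    have h1 : (h ^ (((q:ℝ) - p) / q)) ^ q ≤ (m:ℝ) ^ q :=
      pow_le_pow_left₀ (Real.rpow_nonneg hh.le _) hmr q
    calc h ^ ((q:ℝ) - p) = (h ^ (((q:ℝ) - p) / q)) ^ q := by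
          rw [← Real.rpow_natCast (h ^ (((q:ℝ) - p) / q)) q, ← Real.rpow_mul hh.le]
          congr 1
          field_simp
      _ ≤ (m:ℝ) ^ q := h1
  -- h^(q+1) ≤ h^(p+1) * m^q
  have hpow : h ^ (q + 1) ≤ h ^ (p + 1) * (m:ℝ) ^ q := by
    have : h ^ (q + 1) = h ^ (p + 1) * h ^ ((q:ℝ) - p) := by
      rw [← Real.rpow_natCast h (q+1), ← Real.rpow_natCast h (p+1),
        ← Real.rpow_add hh]
      congr 1
      push_cast
      ring
    rw [this]
    exact mul_le_mul_of_nonneg_left key (pow_nonneg hh.le _)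
  rw [div_le_iff₀ (pow_pos hceilpos q)]
  have habs : |(c * h) ^ (q + 1)| = |c| ^ (q+1) * h ^ (q+1) := by
    rw [abs_pow, abs_mul, abs_of_pos hh, mul_pow]
  rw [habs]
  calc |c| ^ (q+1) * h ^ (q+1)
      ≤ |c| ^ (q+1) * (h ^ (p + 1) * (m:ℝ) ^ q) :=
        mul_le_mul_of_nonneg_left hpow (pow_nonneg hc'.le _)
    _ = |c| * h ^ (p+1) * (|c| * m) ^ q := by rw [mul_pow]; ring
    _ ≤ |c| * h ^ (p+1) * (⌈|c| * (m:ℝ)⌉ : ℝ) ^ q :=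
        mul_le_mul_of_nonneg_left (pow_le_pow_left₀ hcm.le hceil q)
          (by positivity)
end

section
/- Let h_min, h ∈ ℝ with 0 < h_min ≤ h, let c ∈ ℝ with c ≠ 0, let p, q ∈ ℕ with p > q ≥ 1, and let m ∈ ℕ with m ≥ 1. If h_min^((q − p : ℝ)/q) ≤ m (real power with real exponent), then |(c·h)^(q+1)| / ⌈|c|·m⌉^q ≤ |c| · h^(p+1), where ⌈|c|·m⌉ denotes the ceiling of the real number |c|·m. -/
theorem stmt6 (hmin h : ℝ) (hhmin : 0 < hmin) (hle : hmin ≤ h)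
    (c : ℝ) (hc : c ≠ 0) (p q : ℕ) (hq : 1 ≤ q) (hpq : q < p)
    (m : ℕ) (hm : 1 ≤ m)
    (hmr : hmin ^ (((q : ℝ) - (p : ℝ)) / (q : ℝ)) ≤ (m : ℝ)) :
    |(c * h) ^ (q + 1)| / (⌈|c| * (m : ℝ)⌉ : ℝ) ^ q ≤ |c| * h ^ (p + 1) := by
  have hh : 0 < h := lt_of_lt_of_le hhmin hle
  have hcpos : 0 < |c| := abs_pos.mpr hc
  have hm0 : (1:ℝ) ≤ (m:ℝ) := by exact_mod_cast hm
  have hq0 : (0:ℝ) < q := by exact_mod_cast hq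
  have hqp : (q:ℝ) < p := by exact_mod_cast hpq
  have hexp : (((q:ℝ) - p) / q) ≤ 0 :=
    div_nonpos_of_nonpos_of_nonneg (by linarith) hq0.le
  have h1 : h ^ (((q:ℝ) - p) / q) ≤ (m:ℝ) :=
    le_trans (Real.rpow_le_rpow_of_nonpos hhmin hle hexp) hmr
  -- raise to q-th power
  have h2 : h ^ ((q:ℝ) - p) ≤ (m:ℝ) ^ q := by
    have := pow_le_pow_left₀ (Real.rpow_nonneg hh.le _) h1 q
    calc h ^ ((q:ℝ) - p) = (h ^ (((q:ℝ) - p) / q)) ^ q := by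
          rw [← Real.rpow_natCast (h ^ (((q:ℝ) - p) / q)) q, ← Real.rpow_mul hh.le,
            div_mul_cancel₀ _ hq0.ne']
      _ ≤ (m:ℝ) ^ q := this
  -- key: h ^ (q+1) ≤ h ^ (p+1) * m ^ q
  have hkey : h ^ (q+1) ≤ h ^ (p+1) * (m:ℝ) ^ q := by
    have := mul_le_mul_of_nonneg_left h2 (le_of_lt (pow_pos hh (p+1)))
    calc h ^ (q+1) = h ^ (p+1) * h ^ ((q:ℝ) - p) := by
          rw [← Real.rpow_natCast h (p+1), ← Real.rpow_add hh, ← Real.rpow_natCast h (q+1)]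
          congr 1; push_cast; ring
      _ ≤ h ^ (p+1) * (m:ℝ) ^ q := this
  -- ceiling bound
  have hcm : 0 < |c| * (m:ℝ) := by positivity
  have hceil : |c| * (m:ℝ) ≤ (⌈|c| * (m:ℝ)⌉ : ℝ) := Int.le_ceil _
  have hceilpos : 0 < ((⌈|c| * (m:ℝ)⌉ : ℝ)) := lt_of_lt_of_le hcm hceil
  have hceilpow : (|c| * (m:ℝ)) ^ q ≤ (⌈|c| * (m:ℝ)⌉ : ℝ) ^ q :=
    pow_le_pow_left₀ hcm.le hceil q
  rw [div_le_iff₀ (by positivity)]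
  have lhs : |(c * h) ^ (q + 1)| = |c| ^ (q+1) * h ^ (q+1) := by
    rw [abs_pow, abs_mul, mul_pow, abs_of_pos hh]
  rw [lhs]
  calc |c| ^ (q+1) * h ^ (q+1)
      ≤ |c| ^ (q+1) * (h ^ (p+1) * (m:ℝ) ^ q) := by
        exact mul_le_mul_of_nonneg_left hkey (by positivity)
    _ = (|c| * h ^ (p+1)) * (|c| * (m:ℝ)) ^ q := by ring
    _ ≤ (|c| * h ^ (p+1)) * (⌈|c| * (m:ℝ)⌉ : ℝ) ^ q := by
        exact mul_le_mul_of_nonneg_left hceilpow (by positivity)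
    _ = |c| * h ^ (p+1) * (⌈|c| * (m:ℝ)⌉ : ℝ) ^ q := rfl
end

section
/- Let γ1 = 1/(2 − 2^(1/3)) (where 2^(1/3) is the real cube root of 2), γ2 = 1 − 2·γ1, and γ3 = γ1. Then (γ1/2)³ + ((γ1+γ2)/2)³ + ((γ2+γ3)/2)³ + (γ3/2)³ = (3/8)·(γ1²·γ2 + γ1·γ2² + γ2²·γ3 + γ2·γ3²), and this quantity is nonzero. -/
theorem stmt8 :
    let γ1 : ℝ := 1 / (2 - (2 : ℝ) ^ ((1 : ℝ) / 3))
    let γ2 : ℝ := 1 - 2 * γ1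
    let γ3 : ℝ := γ1
    (γ1 / 2) ^ 3 + ((γ1 + γ2) / 2) ^ 3 + ((γ2 + γ3) / 2) ^ 3 + (γ3 / 2) ^ 3
        = (3 / 8) * (γ1 ^ 2 * γ2 + γ1 * γ2 ^ 2 + γ2 ^ 2 * γ3 + γ2 * γ3 ^ 2) ∧
      (γ1 / 2) ^ 3 + ((γ1 + γ2) / 2) ^ 3 + ((γ2 + γ3) / 2) ^ 3 + (γ3 / 2) ^ 3 ≠ 0 := by
  intro γ1 γ2 γ3
  set c : ℝ := (2 : ℝ) ^ ((1 : ℝ) / 3) with hcdef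
  have hc3 : c ^ 3 = 2 := by
    rw [hcdef, ← Real.rpow_natCast ((2:ℝ) ^ ((1:ℝ)/3)) 3, ← Real.rpow_mul (by norm_num)]
    norm_num
  have hcpos : 0 < c := Real.rpow_pos_of_pos (by norm_num) _
  have hclt : c < 2 := by nlinarith [hc3, hcpos, sq_nonneg (c - 2), sq_nonneg (c + 2)]
  have h2 : (2 : ℝ) - c ≠ 0 := by intro h; linarith
  have hx : γ1 * (2 - c) = 1 := by
    show (1 / (2 - c)) * (2 - c) = 1
    field_simp
  have hpoly : 6 * γ1 ^ 3 - 12 * γ1 ^ 2 + 6 * γ1 - 1 = 0 := by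
    have h3 : (γ1 * (2 - c)) ^ 3 = 1 := by rw [hx]; ring
    have hne : γ1 ≠ 0 := by
      intro h; rw [h] at hx; simp at hx
    have hinv : (2 - c) = 1 / γ1 := by
      field_simp at hx ⊢; linarith [hx]
    have : γ1 ^ 3 * (2 - c) ^ 3 = 1 := by rw [← mul_pow, hx]; ring
    have hexp : γ1 ^ 3 * (8 - 12 * c + 6 * c ^ 2 - c ^ 3) = 1 := by
      rw [← this]; ring
    -- use c^3 = 2 : γ1^3 * (6 - 12 c + 6 c^2) = 1
    have h6 : γ1 ^ 3 * (6 - 12 * c + 6 * c ^ 2) = 1 := by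
      linear_combination hexp + γ1 ^ 3 * hc3
    have hcval : c * γ1 = 2 * γ1 - 1 := by linarith [hx]
    linear_combination h6 + (6 * γ1 - 6 * c * γ1 ^ 2) * hcval
  constructor
  · show (γ1 / 2) ^ 3 + ((γ1 + γ2) / 2) ^ 3 + ((γ2 + γ3) / 2) ^ 3 + (γ3 / 2) ^ 3
        = (3 / 8) * (γ1 ^ 2 * γ2 + γ1 * γ2 ^ 2 + γ2 ^ 2 * γ3 + γ2 * γ3 ^ 2)
    show (γ1 / 2) ^ 3 + ((γ1 + (1 - 2*γ1)) / 2) ^ 3 + (((1 - 2*γ1) + γ1) / 2) ^ 3 + (γ1 / 2) ^ 3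
        = (3 / 8) * (γ1 ^ 2 * (1 - 2*γ1) + γ1 * (1 - 2*γ1) ^ 2 + (1 - 2*γ1) ^ 2 * γ1 + (1 - 2*γ1) * γ1 ^ 2)
    linear_combination (-1/4 : ℝ) * hpoly
  · show (γ1 / 2) ^ 3 + ((γ1 + γ2) / 2) ^ 3 + ((γ2 + γ3) / 2) ^ 3 + (γ3 / 2) ^ 3 ≠ 0
    have key : (γ1 / 2) ^ 3 + ((γ1 + γ2) / 2) ^ 3 + ((γ2 + γ3) / 2) ^ 3 + (γ3 / 2) ^ 3
        = (3 * (γ1 - 1/2) ^ 2 + 1/4) / 4 := by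
      show (γ1 / 2) ^ 3 + ((γ1 + (1 - 2*γ1)) / 2) ^ 3 + (((1 - 2*γ1) + γ1) / 2) ^ 3 + (γ1 / 2) ^ 3
          = (3 * (γ1 - 1/2) ^ 2 + 1/4) / 4
      ring
    rw [key]
    positivity
end
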